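/- arXiv:2509.07185 — 4 statements merged into one kernel-verified Lean document; each statement's English description precedes it below -/
import Mathlib

section
/- Let D ≥ 1, ℏ > 0, ψ ∈ 𝒮(ℝ^D; ℂ) a Schwartz function, j ∈ {1,…,D}, and x₀, p₀ ∈ ℝ. Then ‖(x_j − x₀)·ψ‖_{L²(ℝ^D)} + ‖−iℏ ∂_{x_j} ψ − p₀·ψ‖_{L²(ℝ^D)} ≥ √ℏ · ‖ψ‖_{L²(ℝ^D)}. -/
noncomputable def L2norm (D : ℕ) (f : EuclideanSpace ℝ (Fin D) → ℂ) : ℝ :=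
  Real.sqrt (∫ x : EuclideanSpace ℝ (Fin D), ‖f x‖ ^ 2)

/-!
Put `X = (x_j - x₀) ψ` and `P = -iℏ ∂_j ψ - p₀ ψ`. Integrating `∂_j (x_j - x₀) = 1` against `‖ψ‖²`
by parts gives `ℏ ‖ψ‖² = -2 ∫ ⟪X, i P⟫_ℝ`; the shift `p₀` drops out because `⟪ψ, i ψ⟫_ℝ = 0`.
Cauchy–Schwarz then bounds `ℏ ‖ψ‖²` by `2 ‖X‖ ‖P‖ ≤ (‖X‖ + ‖P‖)²`.
-/

open MeasureTheory SchwartzMap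
open scoped LineDeriv RealInnerProductSpace

section L2

variable {α F : Type*} [MeasurableSpace α] {μ : Measure α}
  [NormedAddCommGroup F] [InnerProductSpace ℝ F] {f g : α → F}

theorem MeasureTheory.MemLp.inner_toLp (hf : MemLp f 2 μ) (hg : MemLp g 2 μ) :
    ⟪hf.toLp, hg.toLp⟫ = ∫ x, ⟪f x, g x⟫ ∂μ := by
  rw [L2.inner_def]
  refine integral_congr_ae ?_
  filter_upwards [hf.coeFn_toLp, hg.coeFn_toLp] with x hfx hgx
  rw [hfx, hgx]

theorem MeasureTheory.MemLp.norm_toLp_two (hf : MemLp f 2 μ) :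
    ‖hf.toLp‖ = √(∫ x, ‖f x‖ ^ 2 ∂μ) := by
  rw [← Real.sqrt_sq (norm_nonneg hf.toLp), ← real_inner_self_eq_norm_sq, hf.inner_toLp hf]
  simp_rw [real_inner_self_eq_norm_sq]

theorem abs_integral_inner_le_sqrt_mul_sqrt (hf : MemLp f 2 μ) (hg : MemLp g 2 μ) :
    |∫ x, ⟪f x, g x⟫ ∂μ| ≤ √(∫ x, ‖f x‖ ^ 2 ∂μ) * √(∫ x, ‖g x‖ ^ 2 ∂μ) := by
  rw [← hf.inner_toLp hg, ← hf.norm_toLp_two, ← hg.norm_toLp_two]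
  exact abs_real_inner_le_norm _ _

end L2

namespace SchwartzMap

variable {E F : Type*} [NormedAddCommGroup E] [NormedSpace ℝ E]
  [NormedAddCommGroup F] [InnerProductSpace ℝ F]

theorem lineDerivOp_smulLeftCLM_apply {g : E → ℝ} (hg : g.HasTemperateGrowth)
    (f : 𝓢(E, F)) (v x : E) :
    ∂_{v} (smulLeftCLM F g f) x = fderiv ℝ g x v • f x + g x • ∂_{v} f x := by
  have hgf : HasFDerivAt (fun y => g y • f y) _ x :=
    (hg.1.differentiable (by simp) x).hasFDerivAt.smul (f.differentiableAt (x := x)).hasFDerivAt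
  rw [lineDerivOp_apply_eq_fderiv, smulLeftCLM_apply hg, hgf.fderiv, lineDerivOp_apply_eq_fderiv]
  simp [add_comm]

variable [MeasurableSpace E] [BorelSpace E] [FiniteDimensional ℝ E] {μ : Measure E}
  [μ.IsAddHaarMeasure]

theorem integrable_inner (f h : 𝓢(E, F)) : Integrable (fun x => ⟪f x, h x⟫) μ :=
  (bilinLeftCLM (innerSL ℝ) h.hasTemperateGrowth f).integrable

theorem integral_fderiv_mul_norm_sq {g : E → ℝ} (hg : g.HasTemperateGrowth)
    (ψ : 𝓢(E, F)) (v : E) :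
    ∫ x, fderiv ℝ g x v * ‖ψ x‖ ^ 2 ∂μ = -2 * ∫ x, g x * ⟪ψ x, ∂_{v} ψ x⟫ ∂μ := by
  set X := smulLeftCLM F g ψ
  have hX : ∀ x, ⟪X x, ∂_{v} ψ x⟫ = g x * ⟪ψ x, ∂_{v} ψ x⟫ := fun x => by
    rw [smulLeftCLM_apply_apply hg, real_inner_smul_left]
  have hdX : ∀ x, fderiv ℝ g x v * ‖ψ x‖ ^ 2 = ⟪∂_{v} X x, ψ x⟫ - g x * ⟪ψ x, ∂_{v} ψ x⟫ :=
    fun x => by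
      rw [lineDerivOp_smulLeftCLM_apply hg, inner_add_left, real_inner_smul_left,
        real_inner_smul_left, real_inner_self_eq_norm_sq, real_inner_comm]
      ring
  have ibp : ∫ x, ⟪X x, ∂_{v} ψ x⟫ ∂μ = -∫ x, ⟪∂_{v} X x, ψ x⟫ ∂μ :=
    integral_bilinear_lineDerivOp_right_eq_neg_left X ψ (innerSL ℝ) v
  simp only [hX] at ibp
  simp only [hdX]
  rw [integral_sub (integrable_inner _ _) (by simpa only [hX] using integrable_inner (μ := μ) X (∂_{v} ψ)),
    ← neg_eq_iff_eq_neg.mpr ibp]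
  ring

end SchwartzMap

theorem uncertainty_sum_general (D : ℕ) (ℏ : ℝ) (hℏ : 0 < ℏ)
    (ψ : SchwartzMap (EuclideanSpace ℝ (Fin D)) ℂ) (j : Fin D) (x₀ p₀ : ℝ) :
    L2norm D (fun x => ((x j : ℂ) - (x₀ : ℂ)) * ψ x) +
      L2norm D (fun x =>
        (-Complex.I * (ℏ : ℂ)) * fderiv ℝ (⇑ψ) x (EuclideanSpace.single j 1)
          - (p₀ : ℂ) * ψ x)
      ≥ Real.sqrt ℏ * L2norm D (fun x => ψ x) := by
  set v : EuclideanSpace ℝ (Fin D) := EuclideanSpace.single j 1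
  set g : EuclideanSpace ℝ (Fin D) → ℝ := fun x => x j - x₀
  have hg : g.HasTemperateGrowth :=
    (EuclideanSpace.proj j : EuclideanSpace ℝ (Fin D) →L[ℝ] ℝ).hasTemperateGrowth.sub (.const x₀)
  have hgv : ∀ x, fderiv ℝ g x v = 1 := fun x => by
    have hgx : HasFDerivAt g (EuclideanSpace.proj j : EuclideanSpace ℝ (Fin D) →L[ℝ] ℝ) x :=
      (EuclideanSpace.proj (𝕜 := ℝ) j).hasFDerivAt.sub_const x₀
    simp only [hgx.fderiv, PiLp.proj_apply, PiLp.single_eq_same, v]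
  set X := smulLeftCLM ℂ g ψ
  set P : 𝓢(EuclideanSpace ℝ (Fin D), ℂ) := (-Complex.I * ℏ) • ∂_{v} ψ - (p₀ : ℂ) • ψ
  have hX : ⇑X = fun x => ((x j : ℂ) - x₀) * ψ x := by
    ext x
    simp only [smulLeftCLM_apply_apply hg, Complex.real_smul, Complex.ofReal_sub, X, g]
  have hP : ⇑P = fun x => (-Complex.I * ℏ) * fderiv ℝ ψ x v - p₀ * ψ x := by
    ext x
    simp only [P, sub_apply, smul_apply, lineDerivOp_apply_eq_fderiv, smul_eq_mul]
  have commutator : ℏ * ∫ x, ‖ψ x‖ ^ 2 = -2 * ∫ x, ⟪X x, Complex.I * P x⟫ := by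
    have ibp := integral_fderiv_mul_norm_sq (μ := volume) hg ψ v
    simp only [hgv, one_mul] at ibp
    rw [ibp, mul_left_comm, ← integral_const_mul]
    congr 2 with x
    simp only [hX, hP, Complex.inner, lineDerivOp_apply_eq_fderiv, g, map_mul, map_sub,
      Complex.conj_ofReal, Complex.mul_re, Complex.mul_im, Complex.sub_re, Complex.sub_im,
      Complex.neg_re, Complex.neg_im, Complex.I_re, Complex.I_im, Complex.ofReal_re,
      Complex.ofReal_im, Complex.conj_re, Complex.conj_im]
    ring
  have cauchy_schwarz := abs_integral_inner_le_sqrt_mul_sqrt (X.memLp 2) ((Complex.I • P).memLp 2)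
  simp only [smul_apply, smul_eq_mul, norm_mul, Complex.norm_I, one_mul] at cauchy_schwarz
  unfold L2norm
  rw [← hX, ← hP, ge_iff_le]
  set a := √(∫ x, ‖X x‖ ^ 2)
  set b := √(∫ x, ‖P x‖ ^ 2)
  calc √ℏ * √(∫ x, ‖ψ x‖ ^ 2) = √(ℏ * ∫ x, ‖ψ x‖ ^ 2) := (Real.sqrt_mul hℏ.le _).symm
    _ ≤ √((a + b) ^ 2) := by
      gcongr
      rw [commutator]
      nlinarith [neg_abs_le (∫ x, ⟪X x, Complex.I * P x⟫), sq_nonneg (a - b)]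
    _ = a + b := Real.sqrt_sq (by positivity)

/-- for a Schwartz function `ψ` on `ℝ^D`, `j ∈ {1,…,D}` and `x₀, p₀ ∈ ℝ`,
`‖(x_j − x₀)ψ‖_{L²} + ‖−iℏ ∂_j ψ − p₀ ψ‖_{L²} ≥ √ℏ ‖ψ‖_{L²}`. -/
theorem uncertainty_sum (D : ℕ) (hD : 1 ≤ D) (ℏ : ℝ) (hℏ : 0 < ℏ)
    (ψ : SchwartzMap (EuclideanSpace ℝ (Fin D)) ℂ) (j : Fin D) (x₀ p₀ : ℝ) :
    L2norm D (fun x => ((x j : ℂ) - (x₀ : ℂ)) * ψ x) +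
      L2norm D (fun x =>
        (-Complex.I * (ℏ : ℂ)) * fderiv ℝ (⇑ψ) x (EuclideanSpace.single j 1)
          - (p₀ : ℂ) * ψ x)
      ≥ Real.sqrt ℏ * L2norm D (fun x => ψ x) :=
  uncertainty_sum_general D ℏ hℏ ψ j x₀ p₀
end

section
/- Let D ≥ 1, ℏ > 0, α ∈ ℝ^D × ℝ^D, k ≥ 1 an integer, and ψ ∈ 𝒮(ℝ^D; ℂ). Then ‖ψ‖_{H^k_α} ≥ √ℏ · ‖ψ‖_{H^{k−1}_α}. -/
/-- The centered phase-space operators `A_a^α`: position components (`Sum.inl j`) act as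
multiplication by `x_j − α_{x,j}`, momentum components (`Sum.inr j`) act as
`−iℏ ∂_{x_j} − α_{p,j}`. -/
noncomputable def Aop (D : ℕ) (ℏ : ℝ)
    (α : EuclideanSpace ℝ (Fin D) × EuclideanSpace ℝ (Fin D))
    (a : Fin D ⊕ Fin D) (ψ : EuclideanSpace ℝ (Fin D) → ℂ) :
    EuclideanSpace ℝ (Fin D) → ℂ :=
  fun x =>
    match a with
    | Sum.inl j => ((x j : ℂ) - (α.1 j : ℂ)) * ψ x
    | Sum.inr j => (-Complex.I * (ℏ : ℂ)) * fderiv ℝ ψ x (EuclideanSpace.single j 1)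
        - (α.2 j : ℂ) * ψ x

/-- The centered isotropic Sobolev norm
`‖ψ‖_{H^k_α} = ∑_{m ∈ {1,…,2D}^k} ‖A_{m_1}^α (⋯ (A_{m_k}^α ψ))‖_{L²}`. -/
noncomputable def HkNorm (D : ℕ) (ℏ : ℝ)
    (α : EuclideanSpace ℝ (Fin D) × EuclideanSpace ℝ (Fin D)) (k : ℕ)
    (ψ : EuclideanSpace ℝ (Fin D) → ℂ) : ℝ :=
  ∑ m : Fin k → (Fin D ⊕ Fin D),
    L2norm D ((List.ofFn m).foldr (fun a g => Aop D ℏ α a g) ψ)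

/-!
Position and momentum operators `X = x_j - c` and `P = -iℏ ∂_j - b` are symmetric on Schwartz
space and satisfy `[X, P] = iℏ`. Hence `ℏ ‖φ‖² = 2 Im ⟪Xφ, Pφ⟫ ≤ 2 ‖Xφ‖ ‖Pφ‖ ≤ (‖Xφ‖ + ‖Pφ‖)²`,
the Heisenberg uncertainty principle. Apply it to `φ = A_m ψ` for every word `m` of length
`k - 1`: among the `2D` one-letter extensions of `m` in `‖ψ‖_{H^k_α}` the two letters `x_1`,
`p_1` already dominate `√ℏ ‖A_m ψ‖`.
-/

open MeasureTheory SchwartzMap Complex ComplexConjugate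
open scoped LineDeriv InnerProductSpace

theorem le_two_mul_norm_mul_norm_of_inner_sub_inner {H : Type*} [NormedAddCommGroup H]
    [InnerProductSpace ℂ H] {a b : H} {r : ℝ} (h : ⟪a, b⟫_ℂ - ⟪b, a⟫_ℂ = I * r) :
    r ≤ 2 * ‖a‖ * ‖b‖ := by
  rw [← inner_conj_symm b a, sub_conj, mul_comm, mul_right_inj' I_ne_zero, ofReal_inj] at h
  rw [← h, mul_assoc]
  gcongr
  exact (im_le_norm _).trans (norm_inner_le_norm a b)

theorem sqrt_mul_le_add_of_mul_sq_le_two_mul {ℏ N a b : ℝ} (hℏ : 0 ≤ ℏ) (ha : 0 ≤ a)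
    (hb : 0 ≤ b) (h : ℏ * N ^ 2 ≤ 2 * a * b) : √ℏ * N ≤ a + b := by
  refine le_of_sq_le_sq ?_ (add_nonneg ha hb)
  rw [mul_pow, Real.sq_sqrt hℏ]
  nlinarith [sq_nonneg (a - b)]

section PositionMomentum

variable {E : Type*} [NormedAddCommGroup E] [NormedSpace ℝ E]

noncomputable def positionOp (ℓ : E →L[ℝ] ℝ) (c : ℝ) (f : 𝓢(E, ℂ)) : 𝓢(E, ℂ) :=
  smulLeftCLM ℂ (fun x => ℓ x - c) f

noncomputable def momentumOp (ℏ : ℝ) (v : E) (b : ℝ) (f : 𝓢(E, ℂ)) : 𝓢(E, ℂ) :=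
  (-(I * ℏ)) • ∂_{v} f - (b : ℂ) • f

theorem positionOp_apply (ℓ : E →L[ℝ] ℝ) (c : ℝ) (f : 𝓢(E, ℂ)) (x : E) :
    positionOp ℓ c f x = (ℓ x - c : ℝ) * f x := by
  rw [positionOp, smulLeftCLM_apply_apply (by fun_prop), real_smul]

theorem momentumOp_apply (ℏ : ℝ) (v : E) (b : ℝ) (f : 𝓢(E, ℂ)) (x : E) :
    momentumOp ℏ v b f x = -(I * ℏ) * fderiv ℝ f x v - b * f x := by
  simp [momentumOp, lineDerivOp_apply_eq_fderiv]

theorem lineDerivOp_positionOp (ℓ : E →L[ℝ] ℝ) (c : ℝ) (v : E) (f : 𝓢(E, ℂ)) :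
    ∂_{v} (positionOp ℓ c f) = (ℓ v : ℂ) • f + positionOp ℓ c (∂_{v} f) := by
  ext x
  have hpos : (positionOp ℓ c f : E → ℂ) = fun y => ((ℓ y - c : ℝ) : ℂ) * f y :=
    funext (positionOp_apply ℓ c f)
  have hmul : HasFDerivAt (fun y => ((ℓ y - c : ℝ) : ℂ)) (ofRealCLM.comp ℓ) x :=
    ofRealCLM.hasFDerivAt.comp x (ℓ.hasFDerivAt.sub_const c)
  rw [lineDerivOp_apply_eq_fderiv, hpos, (hmul.fun_mul (f.hasFDerivAt x)).fderiv]
  simp only [add_apply, smul_apply, smul_eq_mul, ContinuousLinearMap.comp_apply, ofRealCLM_apply,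
    ofReal_sub, coe_smul, real_smul, positionOp_apply, lineDerivOp_apply_eq_fderiv]
  ring

theorem positionOp_momentumOp_commutator (ℏ : ℝ) (ℓ : E →L[ℝ] ℝ) (c : ℝ) (v : E) (b : ℝ)
    (f : 𝓢(E, ℂ)) :
    positionOp ℓ c (momentumOp ℏ v b f) - momentumOp ℏ v b (positionOp ℓ c f)
      = (I * ℏ * ℓ v) • f := by
  ext x
  simp only [sub_apply, add_apply, smul_apply, smul_eq_mul, momentumOp, positionOp_apply,
    lineDerivOp_positionOp]
  push_cast
  ring

theorem SchwartzMap.toLp_sub [MeasurableSpace E] [OpensMeasurableSpace E] (f g : 𝓢(E, ℂ))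
    (p : ENNReal) (μ : Measure E) [μ.HasTemperateGrowth] :
    (f - g).toLp p μ = f.toLp p μ - g.toLp p μ :=
  rfl

theorem SchwartzMap.toLp_smul [MeasurableSpace E] [OpensMeasurableSpace E] (a : ℂ)
    (f : 𝓢(E, ℂ)) (p : ENNReal) (μ : Measure E) [μ.HasTemperateGrowth] :
    (a • f).toLp p μ = a • f.toLp p μ :=
  rfl

variable [FiniteDimensional ℝ E] [MeasurableSpace E] [BorelSpace E]
  {μ : Measure E} [μ.IsAddHaarMeasure]

theorem inner_toLp_positionOp_left (ℓ : E →L[ℝ] ℝ) (c : ℝ) (f g : 𝓢(E, ℂ)) :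
    ⟪(positionOp ℓ c f).toLp 2 μ, g.toLp 2 μ⟫_ℂ
      = ⟪f.toLp 2 μ, (positionOp ℓ c g).toLp 2 μ⟫_ℂ := by
  simp only [inner_toL2_toL2_eq, positionOp_apply, RCLike.inner_apply, map_mul, conj_ofReal]
  congr 1 with x
  ring

theorem inner_toLp_lineDerivOp_left (v : E) (f g : 𝓢(E, ℂ)) :
    ⟪(∂_{v} f).toLp 2 μ, g.toLp 2 μ⟫_ℂ = -⟪f.toLp 2 μ, (∂_{v} g).toLp 2 μ⟫_ℂ := by
  -- `(a, b) ↦ b * conj a` is only `ℝ`-bilinear, which is enough for integration by parts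
  have ibp := integral_bilinear_lineDerivOp_right_eq_neg_left (μ := μ) f g
    ((ContinuousLinearMap.mul ℝ ℂ).flip.comp (conjCLE : ℂ →L[ℝ] ℂ)) v
  simp only [ContinuousLinearMap.comp_apply, ContinuousLinearMap.flip_apply,
    ContinuousLinearMap.mul_apply', ContinuousLinearEquiv.coe_coe, conjCLE_apply] at ibp
  simp only [inner_toL2_toL2_eq, RCLike.inner_apply]
  rw [ibp, neg_neg]

theorem toLp_momentumOp (ℏ : ℝ) (v : E) (b : ℝ) (f : 𝓢(E, ℂ)) :
    (momentumOp ℏ v b f).toLp 2 μ = -(I * ℏ) • (∂_{v} f).toLp 2 μ - (b : ℂ) • f.toLp 2 μ :=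
  rfl

theorem inner_toLp_momentumOp_left (ℏ : ℝ) (v : E) (b : ℝ) (f g : 𝓢(E, ℂ)) :
    ⟪(momentumOp ℏ v b f).toLp 2 μ, g.toLp 2 μ⟫_ℂ
      = ⟪f.toLp 2 μ, (momentumOp ℏ v b g).toLp 2 μ⟫_ℂ := by
  simp only [toLp_momentumOp, inner_sub_left, inner_sub_right, inner_smul_left, inner_smul_right,
    inner_toLp_lineDerivOp_left, map_neg, map_mul, conj_I, conj_ofReal]
  ring

theorem heisenberg_uncertainty_toLp (ℏ : ℝ) (ℓ : E →L[ℝ] ℝ) (c : ℝ) (v : E) (b : ℝ)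
    (f : 𝓢(E, ℂ)) :
    ℏ * ℓ v * ‖f.toLp 2 μ‖ ^ 2
      ≤ 2 * ‖(positionOp ℓ c f).toLp 2 μ‖ * ‖(momentumOp ℏ v b f).toLp 2 μ‖ := by
  apply le_two_mul_norm_mul_norm_of_inner_sub_inner
  rw [inner_toLp_positionOp_left, inner_toLp_momentumOp_left, ← inner_sub_right,
    ← SchwartzMap.toLp_sub, positionOp_momentumOp_commutator, SchwartzMap.toLp_smul,
    inner_smul_right, inner_self_eq_norm_sq_to_K, RCLike.ofReal_eq_complex_ofReal]
  push_cast
  ring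

end PositionMomentum

theorem L2norm_eq_norm_toLp {D : ℕ} (f : 𝓢(EuclideanSpace ℝ (Fin D), ℂ)) :
    L2norm D f = ‖f.toLp 2‖ := by
  rw [norm_toLp' two_ne_zero ENNReal.ofNat_ne_top, L2norm, Real.sqrt_eq_rpow]
  norm_num

noncomputable def schwartzAop (D : ℕ) (ℏ : ℝ)
    (α : EuclideanSpace ℝ (Fin D) × EuclideanSpace ℝ (Fin D)) :
    Fin D ⊕ Fin D → 𝓢(EuclideanSpace ℝ (Fin D), ℂ) → 𝓢(EuclideanSpace ℝ (Fin D), ℂ)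
  | .inl j => positionOp (EuclideanSpace.proj j) (α.1 j)
  | .inr j => momentumOp ℏ (EuclideanSpace.single j 1) (α.2 j)

theorem coe_schwartzAop (D : ℕ) (ℏ : ℝ)
    (α : EuclideanSpace ℝ (Fin D) × EuclideanSpace ℝ (Fin D)) (a : Fin D ⊕ Fin D)
    (f : 𝓢(EuclideanSpace ℝ (Fin D), ℂ)) :
    ⇑(schwartzAop D ℏ α a f) = Aop D ℏ α a f := by
  funext x
  cases a <;> simp [schwartzAop, Aop, positionOp_apply, momentumOp_apply]

theorem foldr_Aop_eq_coe_foldr_schwartzAop (D : ℕ) (ℏ : ℝ)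
    (α : EuclideanSpace ℝ (Fin D) × EuclideanSpace ℝ (Fin D)) (l : List (Fin D ⊕ Fin D))
    (f : 𝓢(EuclideanSpace ℝ (Fin D), ℂ)) :
    l.foldr (fun a g => Aop D ℏ α a g) f = ⇑(l.foldr (schwartzAop D ℏ α) f) :=
  List.foldr_hom _ fun a g => (coe_schwartzAop D ℏ α a g).symm

theorem sqrt_mul_L2norm_le_sum_L2norm_Aop (D : ℕ) {ℏ : ℝ} (hℏ : 0 ≤ ℏ)
    (α : EuclideanSpace ℝ (Fin D) × EuclideanSpace ℝ (Fin D)) (j : Fin D)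
    (f : 𝓢(EuclideanSpace ℝ (Fin D), ℂ)) :
    √ℏ * L2norm D f ≤ ∑ a, L2norm D (Aop D ℏ α a f) := by
  have heisenberg := heisenberg_uncertainty_toLp (μ := volume) ℏ (EuclideanSpace.proj j) (α.1 j)
    (EuclideanSpace.single j 1) (α.2 j) f
  have hℓv : EuclideanSpace.proj j (EuclideanSpace.single j (1 : ℝ)) = 1 := by simp
  rw [hℓv, mul_one] at heisenberg
  calc √ℏ * L2norm D f
      ≤ L2norm D (Aop D ℏ α (.inl j) f) + L2norm D (Aop D ℏ α (.inr j) f) := by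
        simp only [← coe_schwartzAop, L2norm_eq_norm_toLp]
        exact sqrt_mul_le_add_of_mul_sq_le_two_mul hℏ (norm_nonneg _) (norm_nonneg _) heisenberg
    _ = ∑ a ∈ {.inl j, .inr j}, L2norm D (Aop D ℏ α a f) := by
        rw [Finset.sum_pair Sum.inl_ne_inr]
    _ ≤ ∑ a, L2norm D (Aop D ℏ α a f) :=
        Finset.sum_le_sum_of_subset_of_nonneg (Finset.subset_univ _)
          fun _ _ _ => Real.sqrt_nonneg _

theorem HkNorm_succ (D : ℕ) (ℏ : ℝ)
    (α : EuclideanSpace ℝ (Fin D) × EuclideanSpace ℝ (Fin D)) (k : ℕ)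
    (f : EuclideanSpace ℝ (Fin D) → ℂ) :
    HkNorm D ℏ α (k + 1) f
      = ∑ m : Fin k → (Fin D ⊕ Fin D), ∑ a,
          L2norm D (Aop D ℏ α a ((List.ofFn m).foldr (fun a g => Aop D ℏ α a g) f)) := by
  rw [HkNorm, ← (Fin.consEquiv fun _ => Fin D ⊕ Fin D).sum_comp, Fintype.sum_prod_type,
    Finset.sum_comm]
  simp only [Fin.consEquiv_apply, List.ofFn_succ, Fin.cons_zero, Fin.cons_succ, List.foldr_cons]

/-- for `k ≥ 1` and Schwartz `ψ`, `‖ψ‖_{H^k_α} ≥ √ℏ ‖ψ‖_{H^{k-1}_α}`. -/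
theorem Hk_norm_lower_bound (D : ℕ) (hD : 1 ≤ D) (ℏ : ℝ) (hℏ : 0 < ℏ)
    (α : EuclideanSpace ℝ (Fin D) × EuclideanSpace ℝ (Fin D))
    (k : ℕ) (hk : 1 ≤ k)
    (ψ : SchwartzMap (EuclideanSpace ℝ (Fin D)) ℂ) :
    HkNorm D ℏ α k (fun x => ψ x) ≥ Real.sqrt ℏ * HkNorm D ℏ α (k - 1) (fun x => ψ x) := by
  obtain ⟨k, rfl⟩ := Nat.exists_eq_add_of_le' hk
  rw [Nat.add_sub_cancel, HkNorm_succ, HkNorm, Finset.mul_sum, ge_iff_le]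
  gcongr with m
  rw [foldr_Aop_eq_coe_foldr_schwartzAop]
  exact sqrt_mul_L2norm_le_sum_L2norm_Aop D hℏ.le α ⟨0, hD⟩ _
end

section
/- Let H be a complex Hilbert space and let M, E : H → H be bounded linear operators such that M is self-adjoint and satisfies ⟨ψ, M ψ⟩ ≥ ε ‖ψ‖² for all ψ ∈ H and some ε > 0 (so M is invertible with bounded inverse), E is compact, and A := M + E is self-adjoint. Suppose there exist a Banach space X and an injective continuous linear map ι : H → X such that ‖ι(M⁻¹(E ψ))‖_X ≤ ‖ι ψ‖_X for all ψ ∈ H. Then A is positive semi-definite, i.e. ⟨ψ, A ψ⟩ ≥ 0 for all ψ ∈ H. -/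
/-!
Along the path `t ↦ M + t E`, `t ∈ [0, 1]`, of self-adjoint operators, every operator with
`t < 1` is invertible: `M + t E = M (1 + t M⁻¹ E)` with `M⁻¹ E` compact, so by the Fredholm
alternative injectivity suffices, and `(M + t E) χ = 0` means `M χ = E (-t χ)`, whence
`‖ι χ‖ ≤ t ‖ι χ‖` and `χ = 0`. A positive invertible operator is bounded below by a positive
scalar, so all nearby self-adjoint operators are positive; hence positivity, which holds at
`t = 0` by coercivity, propagates along the path up to `t = 1`.
-/

open Filter Topology Set
open scoped InnerProductSpace

section CStarAlgebra

variable {A : Type*} [CStarAlgebra A] [PartialOrder A] [StarOrderedRing A]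

lemma IsStrictlyPositive.eventually_nonneg {a : A} (ha : IsStrictlyPositive a) :
    ∀ᶠ b in 𝓝 a, IsSelfAdjoint b → 0 ≤ b := by
  nontriviality A
  obtain ⟨r, hr, hra⟩ := (CFC.exists_pos_algebraMap_le_iff ha.isSelfAdjoint).2
    fun x hx ↦ ha.spectrum_pos hx
  filter_upwards [Metric.ball_mem_nhds a hr] with b hb hb_sa
  have hdist : ‖b - a‖ ≤ r := (dist_eq_norm b a ▸ Metric.mem_ball.1 hb).le
  calc (0 : A) ≤ algebraMap ℝ A r - algebraMap ℝ A ‖b - a‖ :=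
        sub_nonneg.2 (algebraMap_mono A hdist)
    _ ≤ a + (b - a) := by
      rw [sub_eq_add_neg]
      exact add_le_add hra (hb_sa.sub ha.isSelfAdjoint).neg_algebraMap_norm_le_self
    _ = b := add_sub_cancel a b

lemma CStarAlgebra.nonneg_of_path_of_isUnit {f : ℝ → A} {a b : ℝ} (hab : a ≤ b)
    (hf : ContinuousOn f (Icc a b)) (hsa : ∀ t ∈ Icc a b, IsSelfAdjoint (f t))
    (ha : 0 ≤ f a) (hunit : ∀ t ∈ Ico a b, IsUnit (f t)) : 0 ≤ f b := by
  refine IsClosed.mem_of_ge_of_forall_exists_gt (s := {t | 0 ≤ f t}) ?_ ha hab ?_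
  · rw [inter_comm]
    exact hf.preimage_isClosed_of_isClosed isClosed_Icc isClosed_nonneg
  · rintro t ⟨ht_nonneg, ht⟩
    have hnear : ∀ᶠ s in 𝓝[Icc a b] t, 0 ≤ f s := by
      filter_upwards [(hf t (Ico_subset_Icc_self ht)).tendsto.eventually
        ((hunit t ht).isStrictlyPositive ht_nonneg).eventually_nonneg,
        self_mem_nhdsWithin] with s hs hs_mem using hs (hsa s hs_mem)
    have : NeBot (𝓝[Ioc t b] t) := left_nhdsWithin_Ioc_neBot ht.2
    have hnear' : ∀ᶠ s in 𝓝[Ioc t b] t, 0 ≤ f s :=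
      nhdsWithin_mono t (Ioc_subset_Icc_self.trans (Icc_subset_Icc_left ht.1)) hnear
    exact (hnear'.and self_mem_nhdsWithin).exists

end CStarAlgebra

section Fredholm

variable {𝕜 X : Type*} [NontriviallyNormedField 𝕜] [NormedAddCommGroup X] [NormedSpace 𝕜 X]
  [CompleteSpace X]

theorem IsUnit.isUnit_add_of_isCompactOperator {M K : X →L[𝕜] X} (hM : IsUnit M)
    (hK : IsCompactOperator K) (hinj : Function.Injective (M + K)) : IsUnit (M + K) := by
  obtain ⟨U, rfl⟩ := hM
  have hfactor : (U : X →L[𝕜] X) + K = U * (1 + ↑U⁻¹ * K) := by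
    rw [mul_add, mul_one, ← mul_assoc, Units.mul_inv, one_mul]
  have hcompact : IsCompactOperator (⇑(-(↑U⁻¹ * K) : X →L[𝕜] X)) :=
    (hK.clm_comp (↑U⁻¹ : X →L[𝕜] X)).neg
  rcases IsCompactOperator.hasEigenvalue_or_mem_resolventSet hcompact one_ne_zero with h | h
  · obtain ⟨x, hx⟩ := h.exists_hasEigenvector
    refine absurd (hinj ?_) hx.2
    have hKx : -(↑U⁻¹ : X →L[𝕜] X) (K x) = x := by
      simpa using Module.End.mem_eigenspace_iff.1 hx.1
    have hsum : x + (↑U⁻¹ : X →L[𝕜] X) (K x) = 0 := eq_neg_iff_add_eq_zero.1 hKx.symm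
    simp [hfactor, hsum]
  · rw [hfactor]
    refine U.isUnit.mul ?_
    simpa [resolventSet, sub_neg_eq_add] using h

end Fredholm

theorem ContinuousLinearMap.isStrictlyPositive_of_coercive {𝕜 H : Type*} [RCLike 𝕜]
    [NormedAddCommGroup H] [InnerProductSpace 𝕜 H] [CompleteSpace H] {M : H →L[𝕜] H}
    (hM : IsSelfAdjoint M) {ε : ℝ} (hε : 0 < ε)
    (hcoer : ∀ ψ : H, ε * ‖ψ‖ ^ 2 ≤ RCLike.re ⟪ψ, M ψ⟫_𝕜) : IsStrictlyPositive M := by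
  have hre : ∀ ψ : H, ε * ‖ψ‖ ^ 2 ≤ RCLike.re ⟪M ψ, ψ⟫_𝕜 := fun ψ ↦ by
    rw [← inner_re_symm]; exact hcoer ψ
  refine IsUnit.isStrictlyPositive ?_ ?_
  · refine isUnit_of_forall_le_norm_inner_map M (c := ⟨ε, hε.le⟩) hε fun ψ ↦ ?_
    calc ‖ψ‖ ^ 2 * ε = ε * ‖ψ‖ ^ 2 := mul_comm _ _
      _ ≤ RCLike.re ⟪M ψ, ψ⟫_𝕜 := hre ψ
      _ ≤ ‖⟪M ψ, ψ⟫_𝕜‖ := RCLike.re_le_norm _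
  · rw [nonneg_iff_isPositive, isPositive_def']
    exact ⟨hM, fun ψ ↦ (by positivity : 0 ≤ ε * ‖ψ‖ ^ 2).trans (hre ψ)⟩

theorem ContinuousLinearMap.injective_add_smul_of_contract {𝕜 H X : Type*} [NormedField 𝕜]
    [NormedAddCommGroup H] [NormedSpace 𝕜 H] [NormedAddCommGroup X] [NormedSpace 𝕜 X]
    {M E : H →L[𝕜] H} {ι : H →L[𝕜] X} (hι : Function.Injective ι)
    (hcontract : ∀ ψ χ : H, M χ = E ψ → ‖ι χ‖ ≤ ‖ι ψ‖) {c : 𝕜} (hc : ‖c‖ < 1) :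
    Function.Injective (M + c • E) := by
  refine (injective_iff_map_eq_zero _).2 fun χ hχ ↦ hι ?_
  have hMχ : M χ = E (-c • χ) := by
    rw [map_smul, neg_smul, eq_neg_iff_add_eq_zero]
    simpa using hχ
  have hle : ‖ι χ‖ ≤ ‖c‖ * ‖ι χ‖ := by
    simpa [norm_smul] using hcontract _ _ hMχ
  rw [map_zero, ← norm_le_zero_iff]
  nlinarith [norm_nonneg (ι χ)]

theorem abstract_positivity_general
    {H : Type*} [NormedAddCommGroup H] [InnerProductSpace ℂ H] [CompleteSpace H]
    (M E : H →L[ℂ] H)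
    (hM : IsSelfAdjoint M)
    (ε : ℝ) (hε : 0 < ε)
    (hcoer : ∀ ψ : H, ε * ‖ψ‖ ^ 2 ≤ (⟪ψ, M ψ⟫_ℂ).re)
    (hE : IsCompactOperator (⇑E))
    (hA : IsSelfAdjoint (M + E))
    (X : Type*) [NormedAddCommGroup X] [NormedSpace ℂ X]
    (ι : H →L[ℂ] X) (hι : Function.Injective ι)
    (hcontract : ∀ ψ χ : H, M χ = E ψ → ‖ι χ‖ ≤ ‖ι ψ‖) :
    ∀ ψ : H, 0 ≤ (⟪ψ, (M + E) ψ⟫_ℂ).re := by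
  have hM_pos := ContinuousLinearMap.isStrictlyPositive_of_coercive hM hε hcoer
  have hE_sa : IsSelfAdjoint E := by simpa using hA.sub hM
  have hpath : 0 ≤ M + ((1 : ℝ) : ℂ) • E := by
    refine CStarAlgebra.nonneg_of_path_of_isUnit (f := fun t : ℝ ↦ M + (t : ℂ) • E)
      zero_le_one (by fun_prop)
      (fun t _ ↦ hM.add (IsSelfAdjoint.smul (Complex.conj_ofReal t) hE_sa))
      (by simpa using hM_pos.nonneg) fun t ht ↦ ?_
    refine hM_pos.isUnit.isUnit_add_of_isCompactOperator (hE.smul (t : ℂ)) ?_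
    refine ContinuousLinearMap.injective_add_smul_of_contract hι hcontract ?_
    rw [Complex.norm_real, Real.norm_of_nonneg ht.1]
    exact ht.2
  rw [Complex.ofReal_one, one_smul, ContinuousLinearMap.nonneg_iff_isPositive] at hpath
  exact hpath.re_inner_nonneg_right

/-- abstract positivity lemma: let `H` be a complex Hilbert space,
`M, E : H →L[ℂ] H` bounded operators with `M` self-adjoint and coercive
(`⟨ψ, Mψ⟩ ≥ ε‖ψ‖²` for some `ε > 0`, so in particular `M` is boundedly invertible),
`E` compact and `A := M + E` self-adjoint.  If there is a Banach space `X` and an injective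
continuous linear map `ι : H → X` such that `M⁻¹ E` is a contraction on `X`
(i.e. `‖ι χ‖_X ≤ ‖ι ψ‖_X` whenever `M χ = E ψ`), then `A` is positive semi-definite. -/
theorem abstract_positivity
    {H : Type*} [NormedAddCommGroup H] [InnerProductSpace ℂ H] [CompleteSpace H]
    (M E : H →L[ℂ] H)
    (hM : IsSelfAdjoint M)
    (ε : ℝ) (hε : 0 < ε)
    (hcoer : ∀ ψ : H, ε * ‖ψ‖ ^ 2 ≤ (⟪ψ, M ψ⟫_ℂ).re)
    (hE : IsCompactOperator (⇑E))
    (hA : IsSelfAdjoint (M + E))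
    (X : Type*) [NormedAddCommGroup X] [NormedSpace ℂ X] [CompleteSpace X]
    (ι : H →L[ℂ] X) (hι : Function.Injective ι)
    (hcontract : ∀ ψ χ : H, M χ = E ψ → ‖ι χ‖ ≤ ‖ι ψ‖) :
    ∀ ψ : H, 0 ≤ (⟪ψ, (M + E) ψ⟫_ℂ).re :=
  abstract_positivity_general M E hM ε hε hcoer hE hA X ι hι hcontract
end

section
/- Let n ≥ 1 be an integer and K ≥ 1 a real number. There exists a constant C = C(n, K) such that for all R > 0 and all x, y ∈ ℝ^n, |φ_R(x + y) − φ_R(x)| ≤ C R^{−1} |y| (1 + (|y|/R)^K) φ_R(x). -/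
open Real Set

local notation "⟪" x ", " y "⟫" => @inner ℝ _ _ x y

/-- The polynomially decaying kernel `φ_R(x) = R^{-n} (1 + |x/R|²)^{-K/2}`. -/
noncomputable def phiR (n : ℕ) (K R : ℝ) (x : EuclideanSpace ℝ (Fin n)) : ℝ :=
  (R ^ n)⁻¹ * (1 + ‖R⁻¹ • x‖ ^ 2) ^ (-(K / 2))

lemma g_ratio {n : ℕ} (K : ℝ) (hK : 0 ≤ K) (a b : EuclideanSpace ℝ (Fin n)) :
    (1 + ‖a‖ ^ 2) ^ (-(K / 2)) ≤
      (2 * (1 + ‖a - b‖ ^ 2)) ^ (K / 2) * (1 + ‖b‖ ^ 2) ^ (-(K / 2)) := by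
  have hb : (0:ℝ) < 1 + ‖b‖ ^ 2 := by positivity
  have hd : (0:ℝ) < 2 * (1 + ‖a - b‖ ^ 2) := by positivity
  have ha : (0:ℝ) < 1 + ‖a‖ ^ 2 := by positivity
  have hle : (1 + ‖b‖ ^ 2) / (2 * (1 + ‖a - b‖ ^ 2)) ≤ 1 + ‖a‖ ^ 2 := by
    rw [div_le_iff₀ hd]
    have h1 : ‖b‖ ≤ ‖a‖ + ‖a - b‖ := by
      simpa [norm_sub_rev] using norm_le_norm_add_norm_sub' b a
    nlinarith [norm_nonneg a, norm_nonneg b, norm_nonneg (a - b), sq_nonneg (‖a‖*‖a-b‖), sq_nonneg (‖a‖ - ‖a-b‖), mul_self_le_mul_self (norm_nonneg b) h1]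
  have key := Real.rpow_le_rpow_of_nonpos (by positivity) hle (by linarith : -(K/2) ≤ 0)
  calc (1 + ‖a‖ ^ 2) ^ (-(K / 2))
      ≤ ((1 + ‖b‖ ^ 2) / (2 * (1 + ‖a - b‖ ^ 2))) ^ (-(K / 2)) := key
    _ = (2 * (1 + ‖a - b‖ ^ 2)) ^ (K / 2) * (1 + ‖b‖ ^ 2) ^ (-(K / 2)) := by
        rw [Real.div_rpow hb.le hd.le, Real.rpow_neg hb.le, Real.rpow_neg hd.le]
        field_simp

lemma key_lemma {n : ℕ} (K : ℝ) (hK : 1 ≤ K) (u v : EuclideanSpace ℝ (Fin n)) :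
    |(1 + ‖u + v‖ ^ 2) ^ (-(K / 2)) - (1 + ‖u‖ ^ 2) ^ (-(K / 2))| ≤
      (K * (2 * (1 + ‖v‖ ^ 2)) ^ (K / 2)) * ‖v‖ * (1 + ‖u‖ ^ 2) ^ (-(K / 2)) := by
  have hK0 : (0:ℝ) ≤ K := by linarith
  set F : ℝ → ℝ := fun t => (1 + ‖u + t • v‖ ^ 2) ^ (-(K / 2)) with hF
  set q : ℝ → ℝ := fun t => 1 + ‖u‖ ^ 2 + 2 * ⟪u, v⟫ * t + ‖v‖ ^ 2 * t ^ 2 with hqdef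
  have hq : ∀ t : ℝ, q t = 1 + ‖u + t • v‖ ^ 2 := by
    intro t
    have := norm_add_sq_real u (t • v)
    rw [hqdef]
    simp only [this, real_inner_smul_right, norm_smul, Real.norm_eq_abs]
    ring_nf
    rw [sq_abs]
    ring
  have hqpos : ∀ t : ℝ, (0:ℝ) < q t := by
    intro t; rw [hq t]; positivity
  set F' : ℝ → ℝ := fun t => (2 * ⟪u, v⟫ + 2 * ‖v‖ ^ 2 * t) * (-(K / 2)) * q t ^ (-(K / 2) - 1)
    with hF'
  have hderiv : ∀ t : ℝ, HasDerivAt F (F' t) t := by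
    intro t
    have h1 : HasDerivAt (fun t : ℝ => 2 * ⟪u, v⟫ * t) (2 * ⟪u, v⟫) t := by
      simpa using (hasDerivAt_id t).const_mul (2 * ⟪u, v⟫)
    have h2 : HasDerivAt (fun t : ℝ => ‖v‖ ^ 2 * t ^ 2) (‖v‖ ^ 2 * (2 * t)) t := by
      simpa using (hasDerivAt_pow 2 t).const_mul (‖v‖ ^ 2)
    have hqd : HasDerivAt q (2 * ⟪u, v⟫ + 2 * ‖v‖ ^ 2 * t) t := by
      have h3 := ((h1.add h2).const_add (1 + ‖u‖ ^ 2))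
      have he : q = fun x : ℝ => 1 + ‖u‖ ^ 2 + (2 * ⟪u, v⟫ * x + ‖v‖ ^ 2 * x ^ 2) := by
        funext x; simp only [hqdef]; ring
      rw [he, show 2 * ⟪u, v⟫ + 2 * ‖v‖ ^ 2 * t = 2 * ⟪u, v⟫ + ‖v‖ ^ 2 * (2 * t) by ring]
      exact h3
    have := hqd.rpow_const (p := -(K / 2)) (Or.inl (hqpos t).ne')
    have heq : F = fun t => q t ^ (-(K / 2)) := by
      funext t; rw [hF, hq t]
    rw [heq]
    exact this
  -- bound on the derivative
  have hbound : ∀ t ∈ Icc (0:ℝ) 1, |F' t| ≤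
      (K * (2 * (1 + ‖v‖ ^ 2)) ^ (K / 2)) * ‖v‖ * (1 + ‖u‖ ^ 2) ^ (-(K / 2)) := by
    intro t ht
    set w := u + t • v with hw
    have hinner : 2 * ⟪u, v⟫ + 2 * ‖v‖ ^ 2 * t = 2 * ⟪w, v⟫ := by
      have : ⟪w, v⟫ = ⟪u, v⟫ + t * ‖v‖ ^ 2 := by
        rw [hw, inner_add_left, real_inner_smul_left, real_inner_self_eq_norm_sq]
      rw [this]; ring
    have hqt : q t = 1 + ‖w‖ ^ 2 := hq t
    have hCS : |⟪w, v⟫| ≤ ‖w‖ * ‖v‖ := abs_real_inner_le_norm w v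
    have hs : (0:ℝ) ≤ ‖w‖ := norm_nonneg _
    have hbase : (1:ℝ) ≤ 1 + ‖w‖ ^ 2 := by linarith [sq_nonneg ‖w‖]
    have hbase0 : (0:ℝ) < 1 + ‖w‖ ^ 2 := by positivity
    -- step 1 : |F' t| ≤ K * ‖v‖ * ‖w‖ * (1+‖w‖^2)^(-(K/2)-1)
    have step1 : |F' t| ≤ K * ‖v‖ * (‖w‖ * (1 + ‖w‖ ^ 2) ^ (-(K / 2) - 1)) := by
      rw [hF']
      simp only [hinner, hqt]
      rw [abs_mul, abs_mul]
      have h3 : (0:ℝ) ≤ (1 + ‖w‖ ^ 2) ^ (-(K / 2) - 1) := by positivity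
      rw [abs_of_nonneg h3, abs_neg, abs_of_nonneg (by linarith : (0:ℝ) ≤ K/2)]
      have h4 : |2 * ⟪w, v⟫| ≤ 2 * (‖w‖ * ‖v‖) := by
        rw [abs_mul, abs_two]; nlinarith
      calc |2 * ⟪w, v⟫| * (K / 2) * (1 + ‖w‖ ^ 2) ^ (-(K / 2) - 1)
          ≤ 2 * (‖w‖ * ‖v‖) * (K / 2) * (1 + ‖w‖ ^ 2) ^ (-(K / 2) - 1) := by
            apply mul_le_mul_of_nonneg_right _ h3
            apply mul_le_mul_of_nonneg_right h4 (by linarith)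
        _ = K * ‖v‖ * (‖w‖ * (1 + ‖w‖ ^ 2) ^ (-(K / 2) - 1)) := by ring
    -- step 2 : ‖w‖ * (1+‖w‖^2)^(-(K/2)-1) ≤ (1+‖w‖^2)^(-(K/2))
    have step2 : ‖w‖ * (1 + ‖w‖ ^ 2) ^ (-(K / 2) - 1) ≤ (1 + ‖w‖ ^ 2) ^ (-(K / 2)) := by
      have h5 : ‖w‖ ≤ (1 + ‖w‖ ^ 2) ^ ((1:ℝ) / 2) := by
        calc ‖w‖ = Real.sqrt (‖w‖ ^ 2) := (Real.sqrt_sq hs).symm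
          _ ≤ Real.sqrt (1 + ‖w‖ ^ 2) := Real.sqrt_le_sqrt (by linarith)
          _ = (1 + ‖w‖ ^ 2) ^ ((1:ℝ) / 2) := Real.sqrt_eq_rpow _
      calc ‖w‖ * (1 + ‖w‖ ^ 2) ^ (-(K / 2) - 1)
          ≤ (1 + ‖w‖ ^ 2) ^ ((1:ℝ) / 2) * (1 + ‖w‖ ^ 2) ^ (-(K / 2) - 1) := by
            apply mul_le_mul_of_nonneg_right h5 (by positivity)
        _ = (1 + ‖w‖ ^ 2) ^ ((1:ℝ) / 2 + (-(K / 2) - 1)) := by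
            rw [← Real.rpow_add hbase0]
        _ ≤ (1 + ‖w‖ ^ 2) ^ (-(K / 2)) := by
            apply Real.rpow_le_rpow_of_exponent_le hbase; linarith
    -- step 3 : (1+‖w‖^2)^(-(K/2)) ≤ (2*(1+‖v‖^2))^(K/2) * (1+‖u‖^2)^(-(K/2))
    have step3 : (1 + ‖w‖ ^ 2) ^ (-(K / 2)) ≤
        (2 * (1 + ‖v‖ ^ 2)) ^ (K / 2) * (1 + ‖u‖ ^ 2) ^ (-(K / 2)) := by
      have := g_ratio K hK0 w u
      have hwu : w - u = t • v := by rw [hw]; abel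
      rw [hwu] at this
      refine this.trans ?_
      apply mul_le_mul_of_nonneg_right _ (by positivity)
      apply Real.rpow_le_rpow (by positivity) _ (by linarith)
      have htv : ‖t • v‖ ≤ ‖v‖ := by
        rw [norm_smul, Real.norm_eq_abs]
        calc |t| * ‖v‖ ≤ 1 * ‖v‖ := by
              apply mul_le_mul_of_nonneg_right _ (norm_nonneg v)
              rw [abs_le]; exact ⟨by linarith [ht.1], ht.2⟩
          _ = ‖v‖ := one_mul _
      nlinarith [norm_nonneg (t • v), norm_nonneg v]
    calc |F' t| ≤ K * ‖v‖ * (‖w‖ * (1 + ‖w‖ ^ 2) ^ (-(K / 2) - 1)) := step1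
      _ ≤ K * ‖v‖ * ((1 + ‖w‖ ^ 2) ^ (-(K / 2))) := by
          apply mul_le_mul_of_nonneg_left step2 (by positivity)
      _ ≤ K * ‖v‖ * ((2 * (1 + ‖v‖ ^ 2)) ^ (K / 2) * (1 + ‖u‖ ^ 2) ^ (-(K / 2))) := by
          apply mul_le_mul_of_nonneg_left step3 (by positivity)
      _ = (K * (2 * (1 + ‖v‖ ^ 2)) ^ (K / 2)) * ‖v‖ * (1 + ‖u‖ ^ 2) ^ (-(K / 2)) := by ring
  -- apply mean value inequality on [0,1]
  have hmvt := norm_image_sub_le_of_norm_deriv_le_segment_01'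
    (f := F) (f' := F')
    (fun t _ => (hderiv t).hasDerivWithinAt)
    (fun t ht => hbound t ⟨ht.1, ht.2.le⟩)
  have hF1 : F 1 = (1 + ‖u + v‖ ^ 2) ^ (-(K / 2)) := by rw [hF]; simp
  have hF0 : F 0 = (1 + ‖u‖ ^ 2) ^ (-(K / 2)) := by rw [hF]; simp
  rw [hF1, hF0] at hmvt
  simpa [Real.norm_eq_abs] using hmvt

lemma poly_bound (K : ℝ) (hK : 1 ≤ K) (s : ℝ) (hs : 0 ≤ s) :
    (2 * (1 + s ^ 2)) ^ (K / 2) ≤ (2:ℝ) ^ (K / 2) * (2:ℝ) ^ K * (1 + s ^ K) := by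
  have h1 : (0:ℝ) ≤ 1 + s ^ 2 := by positivity
  rw [Real.mul_rpow (by norm_num) h1, mul_assoc]
  apply mul_le_mul_of_nonneg_left _ (by positivity)
  have h2 : (1 + s ^ 2) ^ (K / 2) = ((1 + s ^ 2) ^ ((1:ℝ)/2)) ^ K := by
    rw [← Real.rpow_mul h1]; congr 1; ring
  have h3 : (1 + s ^ 2) ^ ((1:ℝ)/2) ≤ 1 + s := by
    rw [← Real.sqrt_eq_rpow]
    calc Real.sqrt (1 + s ^ 2) ≤ Real.sqrt ((1 + s) ^ 2) :=
          Real.sqrt_le_sqrt (by nlinarith)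
      _ = 1 + s := Real.sqrt_sq (by linarith)
  have h4 : ((1 + s ^ 2) ^ ((1:ℝ)/2)) ^ K ≤ (1 + s) ^ K :=
    Real.rpow_le_rpow (by positivity) h3 (by linarith)
  have hmax0 : (0:ℝ) ≤ max 1 s := le_max_of_le_left zero_le_one
  have h5 : (1 + s) ^ K ≤ (2 * max 1 s) ^ K := by
    apply Real.rpow_le_rpow (by linarith) _ (by linarith)
    have := le_max_left (1:ℝ) s
    have := le_max_right (1:ℝ) s
    linarith
  have h6 : (2 * max 1 s) ^ K = (2:ℝ) ^ K * (max 1 s) ^ K :=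
    Real.mul_rpow (by norm_num) hmax0
  have h7 : (max 1 s) ^ K ≤ 1 + s ^ K := by
    rcases le_total s 1 with h | h
    · rw [max_eq_left h, Real.one_rpow]
      have : (0:ℝ) ≤ s ^ K := Real.rpow_nonneg hs K
      linarith
    · rw [max_eq_right h]
      linarith
  calc (1 + s ^ 2) ^ (K / 2) = ((1 + s ^ 2) ^ ((1:ℝ)/2)) ^ K := h2
    _ ≤ (1 + s) ^ K := h4
    _ ≤ (2 * max 1 s) ^ K := h5
    _ = (2:ℝ) ^ K * (max 1 s) ^ K := h6
    _ ≤ (2:ℝ) ^ K * (1 + s ^ K) := by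
        apply mul_le_mul_of_nonneg_left h7 (by positivity)

/-- there is `C = C(n, K)` such that for all `R > 0` and `x, y`,
`|φ_R(x + y) − φ_R(x)| ≤ C R⁻¹ |y| (1 + (|y|/R)^K) φ_R(x)`. -/
theorem phiR_displacement (n : ℕ) (hn : 1 ≤ n) (K : ℝ) (hK : 1 ≤ K) :
    ∃ C : ℝ, ∀ R : ℝ, 0 < R → ∀ x y : EuclideanSpace ℝ (Fin n),
      |phiR n K R (x + y) - phiR n K R x| ≤
        C * R⁻¹ * ‖y‖ * (1 + (‖y‖ / R) ^ K) * phiR n K R x := by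
  refine ⟨K * ((2:ℝ) ^ (K / 2) * (2:ℝ) ^ K), fun R hR x y => ?_⟩
  set u : EuclideanSpace ℝ (Fin n) := R⁻¹ • x with hu
  set v : EuclideanSpace ℝ (Fin n) := R⁻¹ • y with hv
  have hK0 : (0:ℝ) ≤ K := by linarith
  have hRn : (0:ℝ) < (R ^ n)⁻¹ := by positivity
  have huv : R⁻¹ • (x + y) = u + v := by rw [hu, hv, smul_add]
  have hvn : ‖v‖ = ‖y‖ / R := by
    rw [hv, norm_smul, norm_inv, Real.norm_eq_abs, abs_of_pos hR, div_eq_inv_mul]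
  have hkey := key_lemma K hK u v
  have hpoly := poly_bound K hK ‖v‖ (norm_nonneg v)
  have hg0 : (0:ℝ) ≤ (1 + ‖u‖ ^ 2) ^ (-(K / 2)) := by positivity
  have hstep : |(1 + ‖u + v‖ ^ 2) ^ (-(K / 2)) - (1 + ‖u‖ ^ 2) ^ (-(K / 2))| ≤
      (K * ((2:ℝ) ^ (K / 2) * (2:ℝ) ^ K)) * ‖v‖ * (1 + ‖v‖ ^ K) *
        (1 + ‖u‖ ^ 2) ^ (-(K / 2)) := by
    refine hkey.trans ?_
    have : K * (2 * (1 + ‖v‖ ^ 2)) ^ (K / 2) ≤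
        K * ((2:ℝ) ^ (K / 2) * (2:ℝ) ^ K) * (1 + ‖v‖ ^ K) := by
      calc K * (2 * (1 + ‖v‖ ^ 2)) ^ (K / 2)
          ≤ K * ((2:ℝ) ^ (K / 2) * (2:ℝ) ^ K * (1 + ‖v‖ ^ K)) :=
            mul_le_mul_of_nonneg_left hpoly hK0
        _ = K * ((2:ℝ) ^ (K / 2) * (2:ℝ) ^ K) * (1 + ‖v‖ ^ K) := by ring
    apply mul_le_mul_of_nonneg_right _ hg0
    calc K * (2 * (1 + ‖v‖ ^ 2)) ^ (K / 2) * ‖v‖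
        ≤ K * ((2:ℝ) ^ (K / 2) * (2:ℝ) ^ K) * (1 + ‖v‖ ^ K) * ‖v‖ :=
          mul_le_mul_of_nonneg_right this (norm_nonneg v)
      _ = K * ((2:ℝ) ^ (K / 2) * (2:ℝ) ^ K) * ‖v‖ * (1 + ‖v‖ ^ K) := by ring
  have hphi1 : phiR n K R (x + y) = (R ^ n)⁻¹ * (1 + ‖u + v‖ ^ 2) ^ (-(K / 2)) := by
    rw [phiR, huv]
  have hphi2 : phiR n K R x = (R ^ n)⁻¹ * (1 + ‖u‖ ^ 2) ^ (-(K / 2)) := rfl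
  rw [hphi1, hphi2, ← mul_sub, abs_mul, abs_of_pos hRn]
  calc (R ^ n)⁻¹ * |(1 + ‖u + v‖ ^ 2) ^ (-(K / 2)) - (1 + ‖u‖ ^ 2) ^ (-(K / 2))|
      ≤ (R ^ n)⁻¹ * ((K * ((2:ℝ) ^ (K / 2) * (2:ℝ) ^ K)) * ‖v‖ * (1 + ‖v‖ ^ K) *
          (1 + ‖u‖ ^ 2) ^ (-(K / 2))) := mul_le_mul_of_nonneg_left hstep hRn.le
    _ = K * ((2:ℝ) ^ (K / 2) * (2:ℝ) ^ K) * R⁻¹ * ‖y‖ * (1 + (‖y‖ / R) ^ K) *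
          ((R ^ n)⁻¹ * (1 + ‖u‖ ^ 2) ^ (-(K / 2))) := by
        rw [hvn, div_eq_inv_mul]; ring
end
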